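/- arXiv:2506.17574 — 4 statements merged into one kernel-verified Lean document; each statement's English description precedes it below -/
import Mathlib

section
/- Suppose α ∈ S satisfies c_α = 2 and ⟨α, θ^∨⟩ = 1. Then for every root β ∈ Φ one has ⟨β, θ^∨⟩ = x_α(β), the coefficient of α in the expression of β in the base; in particular, for every negative root β ∈ Φ⁻, ⟨β, θ^∨⟩ ∈ {0, −1, −2}. -/
/-!
An abstract based (reduced, irreducible, crystallographic) root system:
`Φ` is the set of roots in a real vector space `V`, `S` is a base (set of
simple roots), `coeff r β` is the integer coefficient `x_β(r)` of the simple
root `β` in the expression of the root `r` in the base, `pairing r s` is the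
integer `⟨r, s^∨⟩` (pairing of the root `r` with the coroot of the root `s`),
and `highest` is the highest root `θ = Σ_{β ∈ S} c_β • β`, characterized by
the fact that `θ - r` is a nonnegative integer combination of `S` for every
root `r` (field `highest_le`); irreducibility is recorded through the fact
that every coefficient of the highest root is positive (`highest_coeff_pos`).
-/
structure BasedRootData (V : Type*) [AddCommGroup V] [Module ℝ V] where
  Φ : Set V
  S : Finset V
  coeff : V → V → ℤ
  pairing : V → V → ℤ
  S_subset : (S : Set V) ⊆ Φ
  finite : Φ.Finite
  root_ne_zero : ∀ r ∈ Φ, r ≠ (0 : V)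
  neg_mem : ∀ r ∈ Φ, -r ∈ Φ
  indep : LinearIndependent ℝ (fun β : S => (β : V))
  span_root : ∀ r ∈ Φ, r = ∑ β ∈ S, (coeff r β : ℝ) • (β : V)
  coeff_sign : ∀ r ∈ Φ, (∀ β ∈ S, 0 ≤ coeff r β) ∨ (∀ β ∈ S, coeff r β ≤ 0)
  coeff_neg : ∀ r ∈ Φ, ∀ β ∈ S, coeff (-r) β = - coeff r β
  coeff_simple_self : ∀ β ∈ S, coeff β β = 1
  coeff_simple_ne : ∀ β ∈ S, ∀ γ ∈ S, γ ≠ β → coeff β γ = 0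
  pairing_self : ∀ r ∈ Φ, pairing r r = 2
  pairing_linear : ∀ r ∈ Φ, ∀ s ∈ Φ, pairing r s = ∑ β ∈ S, coeff r β * pairing β s
  reflect_mem : ∀ r ∈ Φ, ∀ s ∈ Φ, r - (pairing r s) • s ∈ Φ
  highest : V
  highest_mem : highest ∈ Φ
  highest_le : ∀ r ∈ Φ, ∀ β ∈ S, coeff r β ≤ coeff highest β
  highest_coeff_pos : ∀ β ∈ S, 0 < coeff highest β

namespace BasedRootData

variable {V : Type*} [AddCommGroup V] [Module ℝ V]

/-- The set `Φ⁺` of positive roots: roots all of whose coefficients in the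
base are nonnegative. -/
def Pos (B : BasedRootData V) : Set V :=
  {r ∈ B.Φ | ∀ β ∈ B.S, 0 ≤ B.coeff r β}

/-- The set `Φ⁻` of negative roots: roots all of whose coefficients in the
base are nonpositive. -/
def Neg (B : BasedRootData V) : Set V :=
  {r ∈ B.Φ | ∀ β ∈ B.S, B.coeff r β ≤ 0}

/-- `μ(α)`: the set of positive roots whose coefficient at the simple root
`α` equals the coefficient `c_α` of `α` in the highest root. -/
def mu (B : BasedRootData V) (α : V) : Set V :=
  {r ∈ B.Pos | B.coeff r α = B.coeff B.highest α}

end BasedRootData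

/-!
Since `θ` is the highest root, `⟨γ, θ^∨⟩ ≥ 0` for every simple root `γ`: otherwise the
reflection of `γ` in `θ` would have coefficient `1 - ⟨γ, θ^∨⟩ c_γ > c_γ` at `γ`. Expanding
`2 = ⟨θ, θ^∨⟩ = Σ_γ c_γ ⟨γ, θ^∨⟩`, the term `c_α ⟨α, θ^∨⟩ = 2` already exhausts the sum, so
all other simple roots are orthogonal to `θ^∨` and `⟨β, θ^∨⟩ = x_α(β) ⟨α, θ^∨⟩ = x_α(β)`.
For a negative root, `0 ≥ x_α(β) = -x_α(-β) ≥ -c_α = -2`.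
-/

namespace BasedRootData

variable {V : Type*} [AddCommGroup V] [Module ℝ V] (B : BasedRootData V)

theorem coeff_eq_of_eq_sum {r : V} (hr : r ∈ B.Φ) {f : V → ℤ}
    (h : r = ∑ β ∈ B.S, (f β : ℝ) • β) {β : V} (hβ : β ∈ B.S) :
    B.coeff r β = f β := by
  have hzero : ∑ γ : B.S, ((B.coeff r γ - f γ : ℤ) : ℝ) • (γ : V) = 0 := by
    rw [Finset.sum_coe_sort B.S (fun γ => ((B.coeff r γ - f γ : ℤ) : ℝ) • γ)]
    simp only [Int.cast_sub, sub_smul, Finset.sum_sub_distrib]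
    rw [← B.span_root r hr, ← h, sub_self]
  have : ((B.coeff r β - f β : ℤ) : ℝ) = 0 :=
    Fintype.linearIndependent_iff.mp B.indep _ hzero ⟨β, hβ⟩
  exact sub_eq_zero.mp (by exact_mod_cast this)

theorem coeff_sub_zsmul {r s : V} (hr : r ∈ B.Φ) (hs : s ∈ B.Φ) (k : ℤ)
    (hrs : r - k • s ∈ B.Φ) {β : V} (hβ : β ∈ B.S) :
    B.coeff (r - k • s) β = B.coeff r β - k * B.coeff s β := by
  refine B.coeff_eq_of_eq_sum hrs (f := fun γ => B.coeff r γ - k * B.coeff s γ) ?_ hβ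
  conv_lhs => rw [B.span_root r hr, B.span_root s hs, ← Int.cast_smul_eq_zsmul ℝ,
    Finset.smul_sum, ← Finset.sum_sub_distrib]
  refine Finset.sum_congr rfl fun γ _ => ?_
  rw [smul_smul, ← sub_smul]
  push_cast
  rfl

theorem neg_coeff_highest_le_coeff {r : V} (hr : r ∈ B.Φ) {β : V} (hβ : β ∈ B.S) :
    -B.coeff B.highest β ≤ B.coeff r β := by
  have := B.highest_le (-r) (B.neg_mem r hr) β hβ
  rw [B.coeff_neg r hr β hβ] at this
  omega

theorem pairing_simple_highest_nonneg {γ : V} (hγ : γ ∈ B.S) :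
    0 ≤ B.pairing γ B.highest := by
  by_contra! hneg
  have hγΦ := B.S_subset hγ
  have hrefl := B.reflect_mem γ hγΦ B.highest B.highest_mem
  have hle := B.highest_le _ hrefl γ hγ
  rw [B.coeff_sub_zsmul hγΦ B.highest_mem _ hrefl hγ, B.coeff_simple_self γ hγ] at hle
  nlinarith [B.highest_coeff_pos γ hγ]

theorem pairing_highest_eq_sum :
    ∑ γ ∈ B.S, B.coeff B.highest γ * B.pairing γ B.highest = 2 := by
  rw [← B.pairing_linear _ B.highest_mem _ B.highest_mem, B.pairing_self _ B.highest_mem]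

theorem pairing_simple_highest_eq_zero {α : V} (hα : α ∈ B.S)
    (h : B.coeff B.highest α * B.pairing α B.highest = 2) {γ : V} (hγ : γ ∈ B.S)
    (hγα : γ ≠ α) :
    B.pairing γ B.highest = 0 := by
  classical
  have hterms_nonneg : ∀ δ ∈ B.S.erase α, 0 ≤ B.coeff B.highest δ * B.pairing δ B.highest :=
    fun δ hδ => mul_nonneg (B.highest_coeff_pos δ (Finset.mem_of_mem_erase hδ)).le
      (B.pairing_simple_highest_nonneg (Finset.mem_of_mem_erase hδ))
  have hrest : ∑ δ ∈ B.S.erase α, B.coeff B.highest δ * B.pairing δ B.highest = 0 := by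
    have := B.pairing_highest_eq_sum
    rw [← Finset.add_sum_erase _ _ hα, h] at this
    omega
  have hterm := (Finset.sum_eq_zero_iff_of_nonneg hterms_nonneg).mp hrest γ
    (Finset.mem_erase.mpr ⟨hγα, hγ⟩)
  exact (mul_eq_zero.mp hterm).resolve_left (B.highest_coeff_pos γ hγ).ne'

theorem pairing_highest_eq_coeff_mul {α : V} (hα : α ∈ B.S)
    (h : B.coeff B.highest α * B.pairing α B.highest = 2) {β : V} (hβ : β ∈ B.Φ) :
    B.pairing β B.highest = B.coeff β α * B.pairing α B.highest := by
  rw [B.pairing_linear β hβ _ B.highest_mem, Finset.sum_eq_single_of_mem α hα]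
  intro γ hγ hγα
  rw [B.pairing_simple_highest_eq_zero hα h hγ hγα, mul_zero]

end BasedRootData

/-- suppose `α ∈ S` satisfies `c_α = 2` and `⟨α, θ^∨⟩ = 1`.
Then for every root `β ∈ Φ` one has `⟨β, θ^∨⟩ = x_α(β)`; in particular
for every negative root `β`, `⟨β, θ^∨⟩ ∈ {0, −1, −2}`. -/
theorem statement6 {V : Type*} [AddCommGroup V] [Module ℝ V] (B : BasedRootData V)
    (α : V) (hα : α ∈ B.S) (hc : B.coeff B.highest α = 2)
    (hp : B.pairing α B.highest = 1) :
    ∀ β ∈ B.Φ, B.pairing β B.highest = B.coeff β α ∧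
      (β ∈ B.Neg → B.pairing β B.highest ∈ ({0, -1, -2} : Set ℤ)) := by
  intro β hβ
  have hpairing : B.pairing β B.highest = B.coeff β α := by
    rw [B.pairing_highest_eq_coeff_mul hα (by rw [hc, hp]; rfl) hβ, hp, mul_one]
  refine ⟨hpairing, fun hneg => ?_⟩
  have hupper := hneg.2 α hα
  have hlower := B.neg_coeff_highest_le_coeff hβ hα
  rw [hc] at hlower
  rw [hpairing]
  simp only [Set.mem_insert_iff, Set.mem_singleton_iff]
  omega
end

section
/- Each of E₀ = (−t₁, t₀), E₁ = (t, 0), E₂ = (0, t) lies in M := ker f, and M is generated as a B-module by {E₀, E₁, E₂}. (This is the generation claim in the proof of Lemma 5.1, the rank-2 case of Narasimhan–Ramanan's Proposition 4.4 on elementary transformations.) -/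
open MvPolynomial

/-! `k` is a field, `R = k⟦t⟧`, `Bk k = R[t₀, t₁]` is the polynomial ring in
the two variables `t₀ = X 0`, `t₁ = X 1` over `R`, and
`piB k : Bk k →+* Pk k = k[t₀, t₁]` reduces coefficients modulo `t` (it is
induced by `R → k`, `t ↦ 0`, i.e. by the constant coefficient map on power
series).  `Mker k` is the kernel `M` of the `B`-module map
`f : B ⊕ B → k[t₀, t₁]`, `f(h₀, h₁) = π(h₀)·t₀ + π(h₁)·t₁`, where
`k[t₀, t₁]` is a `B`-module via `π`. -/

/-- `B = k⟦t⟧[t₀, t₁]`. -/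
abbrev Bk (k : Type*) [Field k] := MvPolynomial (Fin 2) (PowerSeries k)

/-- `k[t₀, t₁]`. -/
abbrev Pk (k : Type*) [Field k] := MvPolynomial (Fin 2) k

/-- `π : B → k[t₀, t₁]`, reduction of coefficients modulo `t`. -/
noncomputable def piB (k : Type*) [Field k] : Bk k →+* Pk k :=
  MvPolynomial.map (PowerSeries.constantCoeff : PowerSeries k →+* k)

/-- `M = ker f ⊆ B ⊕ B`, where `f(h₀, h₁) = π(h₀)·t₀ + π(h₁)·t₁`. -/
def Mker (k : Type*) [Field k] : Set (Bk k × Bk k) :=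
  {p | piB k p.1 * X 0 + piB k p.2 * X 1 = 0}

/-- `E₀ = (−t₁, t₀)`. -/
noncomputable def E0 (k : Type*) [Field k] : Bk k × Bk k := (-(X 1), X 0)

/-- `E₁ = (t, 0)`. -/
noncomputable def E1 (k : Type*) [Field k] : Bk k × Bk k := (C PowerSeries.X, 0)

/-- `E₂ = (0, t)`. -/
noncomputable def E2 (k : Type*) [Field k] : Bk k × Bk k := (0, C PowerSeries.X)

/-! Reducing modulo `t`, an element `(h₀, h₁)` of `M` gives a syzygy `π h₀ · t₀ + π h₁ · t₁ = 0`
of the regular sequence `t₀, t₁` in `k[t₀, t₁]`, hence `(π h₀, π h₁) = g · (−t₁, t₀)`.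
Lifting `g` to `a ∈ B`, both coordinates of `(h₀, h₁) − a • E₀` reduce to zero modulo `t`,
i.e. are multiples of `t`, which is exactly a combination of `E₁` and `E₂`. -/

theorem MvPolynomial.exists_eq_of_mul_X_add_mul_X_eq_zero {σ R : Type*} [CommRing R] [IsDomain R]
    {i j : σ} (hij : i ≠ j) {u v : MvPolynomial σ R} (h : u * X i + v * X j = 0) :
    ∃ g, u = -(g * X j) ∧ v = g * X i := by
  have hdvd : (X j : MvPolynomial σ R) ∣ u * X i := ⟨-v, by linear_combination h⟩
  obtain ⟨g, rfl⟩ := (X_prime.dvd_mul.mp hdvd).resolve_right (X_dvd_X.not.mpr hij.symm)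
  refine ⟨-g, by ring, mul_left_cancel₀ (X_ne_zero j) ?_⟩
  linear_combination h

theorem MvPolynomial.C_X_dvd_iff_map_constantCoeff_eq_zero {σ R : Type*} [CommRing R]
    (φ : MvPolynomial σ (PowerSeries R)) :
    C PowerSeries.X ∣ φ ↔ map PowerSeries.constantCoeff φ = 0 :=
  C_dvd_iff_map_hom_eq_zero _ _ (fun _ ↦ PowerSeries.X_dvd_iff.symm) φ

/-- each of `E₀ = (−t₁, t₀)`, `E₁ = (t, 0)`, `E₂ = (0, t)` lies
in `M = ker f`, and `M` is generated as a `B`-module by `{E₀, E₁, E₂}`. -/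
theorem statement13 (k : Type*) [Field k] :
    (E0 k ∈ Mker k ∧ E1 k ∈ Mker k ∧ E2 k ∈ Mker k) ∧
    (∀ p ∈ Mker k, ∃ a b c : Bk k, p = a • E0 k + b • E1 k + c • E2 k) := by
  refine ⟨⟨?_, ?_, ?_⟩, ?_⟩
  · simp only [Mker, E0, Set.mem_ofPred_eq, piB, map_neg, map_X]; ring
  · simp [Mker, E1, piB]
  · simp [Mker, E2, piB]
  rintro ⟨h₀, h₁⟩ hp
  simp only [Mker, piB, Set.mem_ofPred_eq] at hp
  obtain ⟨g, hg₀, hg₁⟩ := exists_eq_of_mul_X_add_mul_X_eq_zero (by decide : (0 : Fin 2) ≠ 1) hp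
  obtain ⟨a, rfl⟩ := map_surjective _ PowerSeries.constantCoeff_surj g
  obtain ⟨b, hb⟩ := (C_X_dvd_iff_map_constantCoeff_eq_zero (h₀ + a * X 1)).mpr <| by
    rw [map_add, map_mul, map_X, hg₀]; ring
  obtain ⟨c, hc⟩ := (C_X_dvd_iff_map_constantCoeff_eq_zero (h₁ - a * X 0)).mpr <| by
    rw [map_sub, map_mul, map_X, hg₁]; ring
  refine ⟨a, b, c, Prod.ext ?_ ?_⟩
  · simp only [E0, E1, E2, Prod.fst_add, Prod.smul_fst, smul_eq_mul]
    linear_combination hb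
  · simp only [E0, E1, E2, Prod.snd_add, Prod.smul_snd, smul_eq_mul]
    linear_combination hc
end

section
/- The kernel of the B-linear map B³ → B ⊕ B sending (a, b, c) to a·E₀ + b·E₁ + c·E₂ (with E₀ = (−t₁, t₀), E₁ = (t, 0), E₂ = (0, t)) is the cyclic B-submodule generated by (t, t₁, −t₀), and this generator has trivial annihilator; i.e. t·E₀ + t₁·E₁ − t₀·E₂ = 0 holds and every relation among E₀, E₁, E₂ is a B-multiple of this one. (This is the unique-relation claim in the proof of Lemma 5.1.) -/
open MvPolynomial

/-! A relation `a·E₀ + b·E₁ + c·E₂ = 0` says `b t = a t₁` and `c t = -a t₀`. As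
`B/(t) = k[t₀, t₁]` is a domain in which `t₁ ≠ 0`, `t` is prime in `B` and does not divide
`t₁`, so it divides `a`; writing `a = d t` and cancelling `t` in the domain `B` gives
`(a, b, c) = d·(t, t₁, -t₀)`. -/

section Relation

variable {A : Type*} [CommRing A] [IsDomain A] {t u v a b c : A}

theorem exists_eq_mul_of_mul_eq_mul_of_prime (ht : Prime t) (hu : ¬t ∣ u)
    (hb : b * t = a * u) (hc : c * t = -(a * v)) :
    ∃ d, a = d * t ∧ b = d * u ∧ c = d * -v := by
  have ht0 : t ≠ 0 := ht.ne_zero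
  obtain ⟨d, rfl⟩ : t ∣ a :=
    (ht.dvd_or_dvd ⟨b, by rw [← hb, mul_comm]⟩).resolve_right hu
  refine ⟨d, mul_comm t d, ?_, ?_⟩
  · exact mul_right_cancel₀ ht0 (by rw [hb]; ring)
  · exact mul_right_cancel₀ ht0 (by rw [hc]; ring)

end Relation

theorem smul_E0_add_smul_E1_add_smul_E2_eq_zero_iff (k : Type*) [Field k] (a b c : Bk k) :
    a • E0 k + b • E1 k + c • E2 k = 0 ↔
      b * C PowerSeries.X = a * X 1 ∧ c * C PowerSeries.X = -(a * X 0) := by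
  simp only [E0, E1, E2, Prod.ext_iff, Prod.fst_add, Prod.snd_add, Prod.smul_fst,
    Prod.smul_snd, Prod.fst_zero, Prod.snd_zero, smul_eq_mul]
  constructor
  · rintro ⟨h₁, h₂⟩
    exact ⟨by linear_combination h₁, by linear_combination h₂⟩
  · rintro ⟨h₁, h₂⟩
    exact ⟨by linear_combination h₁, by linear_combination h₂⟩

theorem prime_C_powerSeriesX (k : Type*) [Field k] : Prime (C PowerSeries.X : Bk k) :=
  (prime_C_iff (Fin 2)).2 PowerSeries.X_prime

theorem not_C_powerSeriesX_dvd_X (k : Type*) [Field k] (i : Fin 2) :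
    ¬(C PowerSeries.X : Bk k) ∣ X i := by
  intro h
  have : piB k (X i) = 0 := by
    rw [piB, ← C_dvd_iff_map_hom_eq_zero _ PowerSeries.X fun r => PowerSeries.X_dvd_iff.symm]
    exact h
  simp [piB, X_ne_zero] at this

/-- the kernel of the `B`-linear map `B³ → B ⊕ B`,
`(a, b, c) ↦ a·E₀ + b·E₁ + c·E₂`, is the cyclic `B`-submodule generated by
`(t, t₁, −t₀)`, and this generator has trivial annihilator: the relation
`t·E₀ + t₁·E₁ − t₀·E₂ = 0` holds, every relation among `E₀, E₁, E₂` is a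
`B`-multiple of it, and `d·(t, t₁, −t₀) = 0` forces `d = 0`. -/
theorem statement14 (k : Type*) [Field k] :
    ((C PowerSeries.X : Bk k) • E0 k + (X 1 : Bk k) • E1 k
        + (-(X 0) : Bk k) • E2 k = 0) ∧
    (∀ a b c : Bk k, a • E0 k + b • E1 k + c • E2 k = 0 →
      ∃ d : Bk k, a = d * C PowerSeries.X ∧ b = d * X 1 ∧ c = d * (-(X 0))) ∧
    (∀ d : Bk k,
      d * C PowerSeries.X = 0 ∧ d * X 1 = 0 ∧ d * (-(X 0)) = 0 → d = 0) := by
  have ht := prime_C_powerSeriesX k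
  refine ⟨?_, fun a b c h => ?_, fun d ⟨h, _⟩ => (mul_eq_zero.1 h).resolve_right ht.ne_zero⟩
  · exact (smul_E0_add_smul_E1_add_smul_E2_eq_zero_iff k _ _ _).2 ⟨by ring, by ring⟩
  · obtain ⟨hb, hc⟩ := (smul_E0_add_smul_E1_add_smul_E2_eq_zero_iff k a b c).1 h
    exact exists_eq_mul_of_mul_eq_mul_of_prime ht (not_C_powerSeriesX_dvd_X k 1) hb hc
end

section
/- For every (h₀, h₁) ∈ M := ker f, the element t divides h₀·t₀ + h₁·t₁ in B. The resulting B-linear map j : M → B, characterized by t·j(h₀, h₁) = h₀·t₀ + h₁·t₁, satisfies: (i) the map B → M, b ↦ b·E₀ (with E₀ = (−t₁, t₀)) is injective; (ii) ker j = B·E₀; and (iii) the image of j is the ideal of B generated by t₀ and t₁. Hence there is a short exact sequence of B-modules 0 → B → M → (t₀, t₁)B → 0. (This realizes the exact sequence 0 → B(−1) → M → B → 0 in the proof of Lemma 5.1.) -/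
open MvPolynomial

/-! Modulo `t`, `h₀t₀ + h₁t₁` reduces to `π(h₀)t₀ + π(h₁)t₁ = 0`, and `ker π = tB`; this gives `j`.
As `t` is a nonzerodivisor, `j(h) = 0` exactly when `h₀t₀ + h₁t₁ = 0`, and since `t₀` is a prime
not dividing `t₁`, these syzygies are the multiples of the Koszul relation `E₀ = (−t₁, t₀)`.
Finally `t·j(h)` has no constant term, hence neither has `j(h)`, so `j(h) ∈ (t₀, t₁)`; conversely
`a t₀ + b t₁ = j(t a, t b)`. -/

theorem mul_add_mul_eq_zero_iff_of_prime {A : Type*} [CommRing A] [IsDomain A] {x y : A}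
    (hx : Prime x) (hxy : ¬x ∣ y) (p : A × A) :
    p.1 * x + p.2 * y = 0 ↔ ∃ c : A, p = c • (-y, x) := by
  constructor
  · intro h
    have hdvd : x ∣ p.2 * y := ⟨-p.1, by linear_combination h⟩
    obtain ⟨c, hc⟩ := (hx.dvd_or_dvd hdvd).resolve_right hxy
    refine ⟨c, Prod.ext ?_ (by simp [hc, mul_comm])⟩
    have : p.1 * x = (c * -y) * x := by linear_combination h - y * hc
    exact mul_right_cancel₀ hx.ne_zero this
  · rintro ⟨c, rfl⟩
    simp only [Prod.smul_fst, Prod.smul_snd, smul_eq_mul]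
    ring

theorem MvPolynomial.mem_idealOfVars_iff {σ R : Type*} [CommSemiring R] (p : MvPolynomial σ R) :
    p ∈ idealOfVars σ R ↔ constantCoeff p = 0 := by
  rw [← pow_one (idealOfVars σ R), mem_pow_idealOfVars_iff']
  simp [constantCoeff, Finsupp.degree_eq_zero_iff]

theorem MvPolynomial.span_X_zero_X_one (R : Type*) [CommSemiring R] :
    Ideal.span {(X 0 : MvPolynomial (Fin 2) R), X 1} = idealOfVars (Fin 2) R := by
  rw [idealOfVars, Fin.range_fin_succ, Fin.range_fin_succ]
  simp [Fin.tail]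

section

variable {k : Type*} [Field k]

theorem C_X_ne_zero : (C PowerSeries.X : Bk k) ≠ 0 :=
  C_ne_zero.mpr PowerSeries.X_ne_zero

theorem piB_eq_zero_iff (g : Bk k) : piB k g = 0 ↔ (C PowerSeries.X : Bk k) ∣ g :=
  (C_dvd_iff_map_hom_eq_zero _ _ (fun _ => PowerSeries.X_dvd_iff.symm) g).symm

theorem C_X_dvd_of_mem_Mker {p : Bk k × Bk k} (hp : p ∈ Mker k) :
    (C PowerSeries.X : Bk k) ∣ p.1 * X 0 + p.2 * X 1 := by
  rw [← piB_eq_zero_iff]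
  simpa [piB, Mker] using hp

theorem C_X_mul_mem_Mker (a b : Bk k) : (C PowerSeries.X * a, C PowerSeries.X * b) ∈ Mker k := by
  simp [Mker, piB]

theorem smul_E0_injective : Function.Injective fun b : Bk k => b • E0 k :=
  fun _ _ h => mul_right_cancel₀ (X_ne_zero 0) (congrArg Prod.snd h)

theorem mul_X_zero_add_mul_X_one_eq_zero_iff (p : Bk k × Bk k) :
    p.1 * X 0 + p.2 * X 1 = 0 ↔ ∃ c : Bk k, p = c • E0 k :=
  mul_add_mul_eq_zero_iff_of_prime X_prime (by simp [X_dvd_X]) p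

theorem constantCoeff_eq_zero_of_C_X_mul_eq {q : Bk k} {p : Bk k × Bk k}
    (h : C PowerSeries.X * q = p.1 * X 0 + p.2 * X 1) : constantCoeff q = 0 := by
  have h₀ := congrArg constantCoeff h
  simp only [map_mul, map_add, constantCoeff_C, constantCoeff_X, mul_zero, add_zero] at h₀
  exact (mul_eq_zero.mp h₀).resolve_left PowerSeries.X_ne_zero

end

/-- for every `(h₀, h₁) ∈ M = ker f`, the element `t` divides
`h₀·t₀ + h₁·t₁` in `B`.  The resulting `B`-linear map `j : M → B`,
characterized by `t·j(h₀, h₁) = h₀·t₀ + h₁·t₁`, satisfies: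
(i) `b ↦ b·E₀` is injective `B → M`; (ii) `ker j = B·E₀`; and (iii) the image
of `j` is the ideal `(t₀, t₁)` of `B`.  Hence there is a short exact sequence
`0 → B → M → (t₀, t₁)B → 0` of `B`-modules. -/
theorem statement15 (k : Type*) [Field k] :
    (∀ p ∈ Mker k, (C PowerSeries.X : Bk k) ∣ (p.1 * X 0 + p.2 * X 1)) ∧
    (∀ j : Bk k × Bk k → Bk k,
      (∀ p ∈ Mker k, (C PowerSeries.X : Bk k) * j p = p.1 * X 0 + p.2 * X 1) →
        (Function.Injective fun b : Bk k => b • E0 k) ∧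
        (∀ p ∈ Mker k, (j p = 0 ↔ ∃ b : Bk k, p = b • E0 k)) ∧
        {q : Bk k | ∃ p ∈ Mker k, j p = q}
          = ↑(Ideal.span {(X 0 : Bk k), (X 1 : Bk k)})) := by
  refine ⟨fun p hp => C_X_dvd_of_mem_Mker hp, fun j hj => ⟨smul_E0_injective, fun p hp => ?_, ?_⟩⟩
  · rw [← mul_X_zero_add_mul_X_one_eq_zero_iff, ← hj p hp, mul_eq_zero, or_iff_right C_X_ne_zero]
  · ext q
    constructor
    · rintro ⟨p, hp, rfl⟩
      rw [SetLike.mem_coe, span_X_zero_X_one, mem_idealOfVars_iff]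
      exact constantCoeff_eq_zero_of_C_X_mul_eq (hj p hp)
    · intro hq
      obtain ⟨a, b, rfl⟩ := Ideal.mem_span_pair.mp hq
      refine ⟨_, C_X_mul_mem_Mker a b, mul_left_cancel₀ C_X_ne_zero ?_⟩
      rw [hj _ (C_X_mul_mem_Mker a b)]
      ring
end
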